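/- arXiv:1105.5318 — 2 statements merged into one kernel-verified Lean document; each statement's English description precedes it below -/
import Mathlib

section
/- There do not exist 7 endomorphisms I₁, …, I₇ of ℝ⁸ satisfying I_α² = Id, I_α* = I_α, and I_α I_β = −I_β I_α for α ≠ β. -/
open Matrix

namespace NoSeven

variable {I : Fin 7 → Matrix (Fin 8) (Fin 8) ℝ}

/-- factor -/
noncomputable def e (I : Fin 7 → Matrix (Fin 8) (Fin 8) ℝ) (i : Fin 7) (b : Bool) :
    Matrix (Fin 8) (Fin 8) ℝ := if b then I i else 1

/-- product over a list -/
noncomputable def Q (I : Fin 7 → Matrix (Fin 8) (Fin 8) ℝ) (L : List (Fin 7))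
    (f : Fin 7 → Bool) : Matrix (Fin 8) (Fin 8) ℝ :=
  (L.map (fun i => e I i (f i))).prod

@[simp] lemma Q_nil (f : Fin 7 → Bool) : Q I [] f = 1 := rfl

lemma Q_cons (a : Fin 7) (L : List (Fin 7)) (f : Fin 7 → Bool) :
    Q I (a :: L) f = e I a (f a) * Q I L f := by
  simp [Q]

lemma Q_append (L M : List (Fin 7)) (f : Fin 7 → Bool) :
    Q I (L ++ M) f = Q I L f * Q I M f := by
  simp [Q]

/-- exact-sign move lemma -/
lemma move (hanti : ∀ α β, α ≠ β → I α * I β = -(I β * I α))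
    (L : List (Fin 7)) (f : Fin 7 → Bool) (a : Fin 7) :
    I a * Q I L f =
      ((-1 : ℝ)) ^ ((L.filter (fun b => f b && (b != a))).length) • (Q I L f * I a) := by
  induction L with
  | nil => simp
  | cons b L ih =>
    rw [Q_cons, ← mul_assoc]
    by_cases hb : f b = true
    · by_cases hba : b = a
      · subst hba
        have : I b * e I b (f b) = e I b (f b) * I b := by simp [e, hb]
        rw [this, mul_assoc, ih, mul_smul_comm, mul_assoc]
        simp [hb]
      · have : I a * e I b (f b) = (-1 : ℝ) • (e I b (f b) * I a) := by
          simp only [e, hb, if_true]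
          rw [hanti a b (fun h => hba h.symm)]
          simp
        rw [this, smul_mul_assoc, mul_assoc, ih, mul_smul_comm, smul_smul, mul_assoc]
        have hcond : (f b && (b != a)) = true := by simp [hb, hba]
        simp [List.filter_cons, hcond, pow_succ, mul_comm]
    · have hb' : f b = false := by simpa using hb
      have : I a * e I b (f b) = e I b (f b) * I a := by simp [e, hb']
      rw [this, mul_assoc, ih, mul_smul_comm, mul_assoc]
      simp [List.filter_cons, hb']

lemma filter_ne_of_not_mem {L : List (Fin 7)} {a : Fin 7} (ha : a ∉ L) (f : Fin 7 → Bool) :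
    L.filter (fun b => f b && (b != a)) = L.filter f := by
  apply List.filter_congr
  intro b hb
  have : b ≠ a := fun h => ha (h ▸ hb)
  simp [this]

/-- move across when a not in L, sign by number of active factors -/
lemma move' (hanti : ∀ α β, α ≠ β → I α * I β = -(I β * I α))
    {L : List (Fin 7)} {a : Fin 7} (ha : a ∉ L) (f : Fin 7 → Bool) :
    I a * Q I L f = ((-1 : ℝ)) ^ ((L.filter f).length) • (Q I L f * I a) := by
  rw [move hanti L f a, filter_ne_of_not_mem ha]

lemma move'' (hanti : ∀ α β, α ≠ β → I α * I β = -(I β * I α))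
    {L : List (Fin 7)} {a : Fin 7} (ha : a ∉ L) (f : Fin 7 → Bool) :
    Q I L f * I a = ((-1 : ℝ)) ^ ((L.filter f).length) • (I a * Q I L f) := by
  rw [move' hanti ha f, smul_smul, ← pow_add]
  rcases Nat.even_or_odd ((L.filter f).length) with h | h
  · simp [(h.add h).neg_one_pow]
  · simp [(h.add_odd h).neg_one_pow]

/-- e-factor multiplication -/
lemma e_mul_e (hsq : ∀ α, I α * I α = 1) (a : Fin 7) (x y : Bool) :
    e I a x * e I a y = e I a (xor x y) := by
  cases x <;> cases y <;> simp [e, hsq]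

/-- existential-sign product lemma -/
lemma mulQ (hsq : ∀ α, I α * I α = 1) (hanti : ∀ α β, α ≠ β → I α * I β = -(I β * I α))
    {L : List (Fin 7)} (hL : L.Nodup) (f g : Fin 7 → Bool) :
    ∃ ε : ℝ, (ε = 1 ∨ ε = -1) ∧
      Q I L f * Q I L g = ε • Q I L (fun i => xor (f i) (g i)) := by
  induction L with
  | nil => exact ⟨1, Or.inl rfl, by simp⟩
  | cons a L ih =>
    have ha : a ∉ L := (List.nodup_cons.mp hL).1
    obtain ⟨ε, hε, hmul⟩ := ih (List.nodup_cons.mp hL).2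
    by_cases hga : g a = true
    · refine ⟨(-1 : ℝ) ^ ((L.filter f).length) * ε, ?_, ?_⟩
      · rcases hε with h | h <;> rcases Nat.even_or_odd ((L.filter f).length) with hp | hp <;>
          simp [h, hp.neg_one_pow]
      · rw [Q_cons, Q_cons, Q_cons]
        have hea : e I a (g a) = I a := by simp [e, hga]
        calc e I a (f a) * Q I L f * (e I a (g a) * Q I L g)
            = e I a (f a) * (Q I L f * I a) * Q I L g := by rw [hea]; noncomm_ring
          _ = e I a (f a) * ((((-1 : ℝ)) ^ ((L.filter f).length)) • (I a * Q I L f)) * Q I L g := by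
              rw [move'' hanti ha f]
          _ = ((-1 : ℝ)) ^ ((L.filter f).length) • (e I a (f a) * e I a (g a) * (Q I L f * Q I L g)) := by
              rw [hea]; rw [mul_smul_comm, smul_mul_assoc]; noncomm_ring
          _ = ((-1 : ℝ) ^ ((L.filter f).length) * ε) • (e I a (xor (f a) (g a)) * Q I L (fun i => xor (f i) (g i))) := by
              rw [e_mul_e hsq, hmul, mul_smul_comm, smul_smul]
    · have hga' : g a = false := by simpa using hga
      refine ⟨ε, hε, ?_⟩
      rw [Q_cons, Q_cons, Q_cons]
      have hea : e I a (g a) = 1 := by simp [e, hga']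
      have hxa : xor (f a) (g a) = f a := by simp [hga']
      rw [hea, hxa, one_mul, mul_assoc, hmul, mul_smul_comm]

lemma Q_reverse (hanti : ∀ α β, α ≠ β → I α * I β = -(I β * I α))
    {L : List (Fin 7)} (hL : L.Nodup) (f : Fin 7 → Bool) :
    Q I L.reverse f = ((-1 : ℝ)) ^ (Nat.choose ((L.filter f).length) 2) • Q I L f := by
  induction L with
  | nil => simp
  | cons a L ih =>
    have ha : a ∉ L := (List.nodup_cons.mp hL).1
    have ihh := ih (List.nodup_cons.mp hL).2
    have hrev : (a :: L).reverse = L.reverse ++ [a] := by simp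
    rw [hrev, Q_append, ihh, Q_cons]
    rw [Q_nil, mul_one]
    by_cases hfa : f a = true
    · have hea : e I a (f a) = I a := by simp [e, hfa]
      have hlen : ((a :: L).filter f).length = (L.filter f).length + 1 := by
        simp [List.filter_cons, hfa]
      rw [hea, smul_mul_assoc, move'' hanti ha f, smul_smul, ← pow_add, hlen, Q_cons, hea]
      congr 1
      rw [Nat.choose_succ_succ', Nat.choose_one_right]
      ring
    · have hfa' : f a = false := by simpa using hfa
      have hea : e I a (f a) = 1 := by simp [e, hfa']
      have hlen : ((a :: L).filter f).length = (L.filter f).length := by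
        simp [List.filter_cons, hfa']
      rw [hea, mul_one, hlen, Q_cons, hea, one_mul]

lemma Q_transpose (hsymm : ∀ α, (I α)ᵀ = I α) (L : List (Fin 7)) (f : Fin 7 → Bool) :
    (Q I L f)ᵀ = Q I L.reverse f := by
  induction L with
  | nil => simp [Q]
  | cons a L ih =>
    have hrev : (a :: L).reverse = L.reverse ++ [a] := by simp
    rw [Q_cons, hrev, Q_append, transpose_mul, ih]
    have : Q I [a] f = e I a (f a) := by simp [Q]
    rw [this]
    congr 1
    cases hfa : f a <;> simp [e, hsymm]

lemma Q_zero (L : List (Fin 7)) : Q I L (fun _ => false) = 1 := by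
  induction L with
  | nil => rfl
  | cons a L ih => rw [Q_cons, ih]; simp [e]

set_option maxRecDepth 100000 in
lemma parity_fact : ∀ f : Fin 7 → Bool, f ≠ (fun _ => false) →
    (∃ j, ((List.finRange 7).filter (fun b => f b && (b != j))).length % 2 = 1) ∨
      (((List.finRange 7).filter f).length = 7) := by decide

lemma trace_Q_zero (hsq : ∀ α, I α * I α = 1) (hsymm : ∀ α, (I α)ᵀ = I α)
    (hanti : ∀ α β, α ≠ β → I α * I β = -(I β * I α))
    (f : Fin 7 → Bool) (hf : f ≠ (fun _ => false)) :
    trace (Q I (List.finRange 7) f) = 0 := by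
  set L := List.finRange 7 with hLdef
  rcases parity_fact f hf with ⟨j, hj⟩ | h7
  · have h1 : I j * Q I L f = -(Q I L f * I j) := by
      rw [move hanti L f j, Odd.neg_one_pow (Nat.odd_iff.mpr hj)]
      simp
    have h2 : trace (I j * Q I L f * I j) = trace (Q I L f) := by
      rw [trace_mul_comm, ← mul_assoc, hsq j, one_mul]
    have h3 : trace (I j * Q I L f * I j) = - trace (Q I L f) := by
      rw [h1]
      rw [neg_mul, mul_assoc, hsq j, mul_one, trace_neg]
    have := h2.symm.trans h3
    linarith
  · have h1 : trace (Q I L f) = trace (Q I L.reverse f) := by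
      rw [← Q_transpose hsymm, trace_transpose]
    rw [Q_reverse hanti (List.nodup_finRange 7) f, h7] at h1
    have hc : Nat.choose 7 2 = 21 := by decide
    have : ((-1 : ℝ)) ^ (Nat.choose 7 2) = -1 := by rw [hc]; norm_num
    rw [this, trace_smul] at h1
    simp at h1
    linarith

end NoSeven

open NoSeven in
/-- There do not exist `7` endomorphisms `I₁, …, I₇` of `ℝ⁸` (real `8 × 8` matrices,
adjoint = transpose) satisfying `I_α² = Id`, `I_α* = I_α` and `I_α I_β = −I_β I_α`
for `α ≠ β`. -/
theorem no_seven_anticommuting_involutions_on_R8 :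
    ¬ ∃ I : Fin 7 → Matrix (Fin 8) (Fin 8) ℝ,
        (∀ α, I α * I α = 1) ∧
        (∀ α, (I α)ᵀ = I α) ∧
        (∀ α β, α ≠ β → I α * I β = -(I β * I α)) := by
  rintro ⟨I, hsq, hsymm, hanti⟩
  set L := List.finRange 7 with hLdef
  have hnd : L.Nodup := List.nodup_finRange 7
  -- trace of products
  have key : ∀ f g : Fin 7 → Bool, f ≠ g → trace (Q I L f * Q I L g) = 0 := by
    intro f g hfg
    obtain ⟨ε, hε, heq⟩ := mulQ hsq hanti hnd f g
    have hx : (fun i => xor (f i) (g i)) ≠ (fun _ => false) := by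
      intro h
      apply hfg
      funext i
      have := congrFun h i
      revert this; cases f i <;> cases g i <;> simp
    rw [heq, trace_smul, trace_Q_zero hsq hsymm hanti _ hx, smul_zero]
  have keyg : ∀ g : Fin 7 → Bool, ∃ ε : ℝ, (ε = 1 ∨ ε = -1) ∧
      trace (Q I L g * Q I L g) = ε * 8 := by
    intro g
    obtain ⟨ε, hε, heq⟩ := mulQ hsq hanti hnd g g
    refine ⟨ε, hε, ?_⟩
    have hx : (fun i => xor (g i) (g i)) = (fun _ => false) := by
      funext i; simp
    rw [heq, hx, Q_zero, trace_smul, trace_one]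
    simp
  -- linear independence
  have hli : LinearIndependent ℝ (fun f : Fin 7 → Bool => Q I L f) := by
    rw [Fintype.linearIndependent_iff]
    intro c hc g
    have h0 : (∑ f : Fin 7 → Bool, c f • Q I L f) * Q I L g = 0 := by
      rw [hc, zero_mul]
    rw [Finset.sum_mul] at h0
    have h1 := congrArg Matrix.trace h0
    rw [trace_sum, trace_zero] at h1
    have h2 : ∀ f : Fin 7 → Bool,
        trace (c f • Q I L f * Q I L g) = c f * trace (Q I L f * Q I L g) := by
      intro f
      rw [smul_mul_assoc, trace_smul, smul_eq_mul]
    simp only [h2] at h1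
    rw [Finset.sum_eq_single g (fun f _ hfg => by rw [key f g hfg, mul_zero])
      (fun h => absurd (Finset.mem_univ g) h)] at h1
    obtain ⟨ε, hε, heq⟩ := keyg g
    rw [heq] at h1
    rcases hε with h | h <;> rw [h] at h1 <;> linarith
  have hcard := hli.fintype_card_le_finrank
  rw [Module.finrank_matrix] at hcard
  simp [Fintype.card_fun] at hcard
end

section
/- In ℝ⁸ with coordinates x₁,…,x₈, the sum of squares of the ten 2-forms θ_{αβ} (Kähler forms of J_{αβ} = I_α I_β for the five standard anticommuting involutions on ℍ²) equals −2 times the left quaternionic 4-form Ω_L = ω_{L_i}² + ω_{L_j}² + ω_{L_k}², where ω_{L_i} = −dx₁₂−dx₃₄−dx₅₆−dx₇₈, ω_{L_j} = −dx₁₃+dx₂₄−dx₅₇+dx₆₈, ω_{L_k} = −dx₁₄−dx₂₃−dx₅₈−dx₆₇. -/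
/-- The basis 1-forms `dx₁,…,dx₈` of `Λ¹ℝ⁸`, modeled in the exterior algebra of `ℝ⁸`
(indices shifted by one: `dx (a-1)` corresponds to `dxₐ`). -/
noncomputable def dx (a : Fin 8) : ExteriorAlgebra ℝ (Fin 8 → ℝ) :=
  ExteriorAlgebra.ι ℝ (Pi.single a 1)

/-- `dx_{ab} = dxₐ ∧ dx_b`. -/
noncomputable def d (a b : Fin 8) : ExteriorAlgebra ℝ (Fin 8 → ℝ) := dx a * dx b

lemma dx_same (a : Fin 8) : dx a * dx a = 0 := by
  simpa [dx] using ExteriorAlgebra.ι_sq_zero (R := ℝ) (Pi.single a (1:ℝ))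

lemma dx_same' (a : Fin 8) (x : ExteriorAlgebra ℝ (Fin 8 → ℝ)) :
    dx a * (dx a * x) = 0 := by
  rw [← mul_assoc, dx_same, zero_mul]

lemma dx_swap (a b : Fin 8) (h : b < a) : dx a * dx b = -(dx b * dx a) := by
  rw [dx, dx, eq_neg_iff_add_eq_zero]
  exact ExteriorAlgebra.ι_add_mul_swap _ _

lemma dx_swap' (a b : Fin 8) (x : ExteriorAlgebra ℝ (Fin 8 → ℝ)) (h : b < a) :
    dx a * (dx b * x) = -(dx b * (dx a * x)) := by
  rw [← mul_assoc, dx_swap a b h, neg_mul, mul_assoc]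

set_option maxHeartbeats 4000000 in
/-- In `ℝ⁸`, the sum of the squares of the ten Kähler 2-forms `θ_{αβ}` of the complex
structures `J_{αβ} = I_α I_β` (for the five standard anticommuting involutions on `ℍ²`)
equals `−2` times the left quaternionic 4-form
`Ω_L = ω_{L_i}² + ω_{L_j}² + ω_{L_k}²`. -/
theorem theta_squares_eq_neg_two_quaternionic_form :
    -- the ten 2-forms θ_{αβ}
    (let θ12 := -d 0 1 + d 2 3 + d 4 5 - d 6 7
     let θ13 := -d 0 2 - d 1 3 + d 4 6 + d 5 7
     let θ14 := -d 0 3 + d 1 2 + d 4 7 - d 5 6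
     let θ23 := -d 0 3 + d 1 2 - d 4 7 + d 5 6
     let θ24 :=  d 0 2 + d 1 3 + d 4 6 + d 5 7
     let θ34 := -d 0 1 + d 2 3 - d 4 5 + d 6 7
     let θ15 := -d 0 4 - d 1 5 - d 2 6 - d 3 7
     let θ25 := -d 0 5 + d 1 4 + d 2 7 - d 3 6
     let θ35 := -d 0 6 - d 1 7 + d 2 4 + d 3 5
     let θ45 := -d 0 7 + d 1 6 - d 2 5 + d 3 4
     -- the left Kähler 2-forms
     let ωLi := -d 0 1 - d 2 3 - d 4 5 - d 6 7
     let ωLj := -d 0 2 + d 1 3 - d 4 6 + d 5 7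
     let ωLk := -d 0 3 - d 1 2 - d 4 7 - d 5 6
     θ12 ^ 2 + θ13 ^ 2 + θ14 ^ 2 + θ23 ^ 2 + θ24 ^ 2 + θ34 ^ 2 +
         θ15 ^ 2 + θ25 ^ 2 + θ35 ^ 2 + θ45 ^ 2 =
       (-2 : ℝ) • (ωLi ^ 2 + ωLj ^ 2 + ωLk ^ 2)) := by
  simp only [d, neg_smul, two_smul]
  simp (config := { decide := true }) only [pow_two, mul_add, add_mul, mul_sub, sub_mul, mul_neg, neg_mul, mul_assoc,
    dx_same, dx_same', dx_swap, dx_swap', neg_neg, mul_zero, zero_mul, neg_zero,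
    Fin.lt_def, Fin.val_zero, Fin.val_one, show ((2:Fin 8):ℕ)=2 from rfl,
    show ((3:Fin 8):ℕ)=3 from rfl, show ((4:Fin 8):ℕ)=4 from rfl,
    show ((5:Fin 8):ℕ)=5 from rfl, show ((6:Fin 8):ℕ)=6 from rfl,
    show ((7:Fin 8):ℕ)=7 from rfl, Nat.lt_irrefl, Nat.lt_succ_iff, Nat.le_refl,
    decide_eq_true_eq, add_zero, zero_add, sub_zero, zero_sub, sub_neg_eq_add]
  abel
end
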